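/- Let d ≥ 2 be an integer, n ∈ R, and h, k ∈ R^d \ {0} with h ≠ k. Let θ ∈ [0,π] be the convex angle between h and k, i.e. cos θ = (h·k)/(|h||k|). Then |h ∧ k|² [ (|k|^n − |k−h|^n)² / (|h|^{2n+2} |k−h|^{2n}) + (|k|^n − |h|^n)² / (|h|^{2n} |k−h|^{2n+2}) ] = |h|^{−(2n−2)} [ D_n(cos θ, |h|/|k|) + (1 − |h|^n/|k|^n)² E_n(cos θ, |h|/|k|) ]. -/
import Mathlib


noncomputable section

/-- Euclidean norm on `ℝ^d` (written out). -/
def rnorm {d : ℕ} (p : Fin d → ℝ) : ℝ := Real.sqrt (∑ i, p i ^ 2)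

/-- Squared norm `|p ∧ q|² = |p|²|q|² − (p·q)²` of the exterior product. -/
def rwedgeSq {d : ℕ} (p q : Fin d → ℝ) : ℝ :=
  (∑ i, p i ^ 2) * (∑ i, q i ^ 2) - (∑ i, p i * q i) ^ 2

/-- The function `D_n` of the paper, defined piecewise at `ε = 0`. -/
def Dfun (n c ε : ℝ) : ℝ :=
  if ε = 0 then n ^ 2 * (c ^ 2 - c ^ 4)
  else (1 - c ^ 2) * (1 - (1 - 2 * c * ε + ε ^ 2) ^ (n / 2)) ^ 2 /
    (ε ^ 2 * (1 - 2 * c * ε + ε ^ 2) ^ n)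

/-- The function `E_n` of the paper. -/
def Efun (n c ε : ℝ) : ℝ := (1 - c ^ 2) / (1 - 2 * c * ε + ε ^ 2) ^ (n + 1)

lemma rnorm_pos {d : ℕ} {p : Fin d → ℝ} (hp : p ≠ 0) : 0 < rnorm p := by
  apply Real.sqrt_pos.mpr
  rcases Function.ne_iff.mp hp with ⟨i, hi⟩
  have hi' : p i ≠ 0 := by simpa using hi
  exact Finset.sum_pos' (fun j _ => sq_nonneg _)
    ⟨i, Finset.mem_univ i, (sq_nonneg _).lt_of_ne (Ne.symm (pow_ne_zero 2 hi'))⟩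

lemma rnorm_sq {d : ℕ} (p : Fin d → ℝ) : rnorm p ^ 2 = ∑ i, p i ^ 2 :=
  Real.sq_sqrt (Finset.sum_nonneg fun i _ => sq_nonneg _)

lemma rpow_two_mul {x : ℝ} (hx : 0 < x) (n : ℝ) : x ^ (2 * n) = (x ^ n) ^ 2 := by
  rw [two_mul, Real.rpow_add hx, sq]

lemma rpow_two' {x : ℝ} (hx : 0 < x) : x ^ (2 : ℝ) = x ^ 2 := by
  rw [← Real.rpow_natCast x 2]; norm_num

/-- for `h, k ∈ ℝ^d \ {0}` with `h ≠ k`, writing `cos θ = (h·k)/(|h||k|)`,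
`|h ∧ k|² [(|k|^n − |k−h|^n)²/(|h|^{2n+2}|k−h|^{2n}) + (|k|^n − |h|^n)²/(|h|^{2n}|k−h|^{2n+2})]
 = |h|^{−(2n−2)} [D_n(cos θ, |h|/|k|) + (1 − |h|^n/|k|^n)² E_n(cos θ, |h|/|k|)]`. -/
theorem stmt11 (d : ℕ) (hd : 2 ≤ d) (n : ℝ) (h k : Fin d → ℝ)
    (hh : h ≠ 0) (hk : k ≠ 0) (hhk : h ≠ k) :
    rwedgeSq h k *
        ((rnorm k ^ n - rnorm (k - h) ^ n) ^ 2 /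
            (rnorm h ^ (2 * n + 2) * rnorm (k - h) ^ (2 * n)) +
          (rnorm k ^ n - rnorm h ^ n) ^ 2 /
            (rnorm h ^ (2 * n) * rnorm (k - h) ^ (2 * n + 2)))
      = rnorm h ^ (-(2 * n - 2)) *
          (Dfun n ((∑ i, h i * k i) / (rnorm h * rnorm k)) (rnorm h / rnorm k) +
            (1 - rnorm h ^ n / rnorm k ^ n) ^ 2 *
              Efun n ((∑ i, h i * k i) / (rnorm h * rnorm k)) (rnorm h / rnorm k)) := by
  have hkh : k - h ≠ 0 := sub_ne_zero.mpr (Ne.symm hhk)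
  set a := rnorm h with ha_def
  set b := rnorm k with hb_def
  set r := rnorm (k - h) with hr_def
  set s := ∑ i, h i * k i with hs_def
  have ha : 0 < a := rnorm_pos hh
  have hb : 0 < b := rnorm_pos hk
  have hr : 0 < r := rnorm_pos hkh
  have hr2 : r ^ 2 = b ^ 2 - 2 * s + a ^ 2 := by
    rw [hr_def, hb_def, ha_def, rnorm_sq, rnorm_sq, rnorm_sq, hs_def]
    simp only [Pi.sub_apply, sub_sq]
    rw [Finset.sum_add_distrib, Finset.sum_sub_distrib]
    have : ∑ x, 2 * k x * h x = 2 * ∑ i, h i * k i := by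
      rw [Finset.mul_sum]; exact Finset.sum_congr rfl (fun i _ => by ring)
    rw [this]
  have hwedge : rwedgeSq h k = a ^ 2 * b ^ 2 - s ^ 2 := by
    rw [rwedgeSq, ha_def, hb_def, rnorm_sq, rnorm_sq, hs_def]
  -- key quadratic rewrite
  have key : 1 - 2 * (s / (a * b)) * (a / b) + (a / b) ^ 2 = (r / b) ^ 2 := by
    have : (r / b) ^ 2 = (b ^ 2 - 2 * s + a ^ 2) / b ^ 2 := by rw [div_pow, hr2]
    rw [this]
    field_simp
  set A := a ^ n with hA_def
  set B := b ^ n with hB_def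
  set R := r ^ n with hR_def
  have hA : 0 < A := Real.rpow_pos_of_pos ha n
  have hB : 0 < B := Real.rpow_pos_of_pos hb n
  have hR : 0 < R := Real.rpow_pos_of_pos hr n
  have hrb : 0 < r / b := by positivity
  have e2 : a ^ (2 * n) = A ^ 2 := rpow_two_mul ha n
  have e3 : r ^ (2 * n) = R ^ 2 := rpow_two_mul hr n
  have e1 : a ^ (2 * n + 2) = A ^ 2 * a ^ 2 := by
    rw [Real.rpow_add ha, e2, rpow_two' ha]
  have e4 : r ^ (2 * n + 2) = R ^ 2 * r ^ 2 := by
    rw [Real.rpow_add hr, e3, rpow_two' hr]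
  have e5 : a ^ (-(2 * n - 2)) = a ^ 2 / A ^ 2 := by
    rw [Real.rpow_neg ha.le, Real.rpow_sub ha, e2, rpow_two' ha, inv_div]
  have h2 : (2 : ℝ) * (n / 2) = n := by ring
  have e6 : ((r / b) ^ 2) ^ (n / 2) = R / B := by
    rw [← rpow_two' hrb, ← Real.rpow_mul hrb.le, h2, Real.div_rpow hr.le hb.le]
  have e7 : ((r / b) ^ 2) ^ n = (R / B) ^ 2 := by
    rw [← rpow_two' hrb, ← Real.rpow_mul hrb.le, rpow_two_mul hrb n,
      Real.div_rpow hr.le hb.le]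
  have h2' : (2 : ℝ) * (n + 1) = 2 * n + 2 := by ring
  have e8 : ((r / b) ^ 2) ^ (n + 1) = (R / B) ^ 2 * (r / b) ^ 2 := by
    rw [← rpow_two' hrb, ← Real.rpow_mul hrb.le, h2',
      Real.rpow_add hrb, rpow_two_mul hrb n, Real.div_rpow hr.le hb.le, rpow_two' hrb]
  have hab : a / b ≠ 0 := by positivity
  rw [hwedge, Dfun, if_neg hab, Efun, key, e6, e7, e8, e1, e2, e3, e4, e5]
  field_simp
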